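/- arXiv:1612.08731 — 2 statements merged into one kernel-verified Lean document; each statement's English description precedes it below -/
import Mathlib

section
/- Primal–dual optimality relation: if (u*, v*) maximizes the dual functional D(u,v) := −tr[ ρ1 Σ_i (exp(u_i + log μ_i) − μ_i) + ρ2 Σ_j (exp(v_j + log ν_j) − ν_j) + ε Σ_{i,j} exp(K(u,v)_{ij}) ] over all collections of symmetric matrices, then the collection γ* defined by γ*_{ij} := exp(K(u*,v*)_{ij}) consists of positive definite matrices and minimizes the primal objective γ ↦ ⟨γ,c⟩ + ρ1·KL(γ1_J | μ) + ρ2·KL(γᵀ1_I | ν) − ε·H(γ) over collections of positive definite matrices. -/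
open Matrix

/-- Matrix exponential of a real matrix. -/
noncomputable def mexp {d : ℕ} (A : Matrix (Fin d) (Fin d) ℝ) : Matrix (Fin d) (Fin d) ℝ :=
  NormedSpace.exp A

/-- Matrix logarithm of a symmetric (hermitian) real matrix, defined through the
eigendecomposition `P = U diag(σ) Uᵀ` as `log P = U diag(log σ) Uᵀ` (junk value `0`
on non-symmetric matrices). -/
noncomputable def mlog {d : ℕ} (A : Matrix (Fin d) (Fin d) ℝ) : Matrix (Fin d) (Fin d) ℝ :=
  if h : A.IsHermitian then
    (h.eigenvectorUnitary : Matrix (Fin d) (Fin d) ℝ)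
      * diagonal (fun i => Real.log (h.eigenvalues i))
      * star (h.eigenvectorUnitary : Matrix (Fin d) (Fin d) ℝ)
  else 0

/-- Quantum (von Neumann) entropy `H(P) = -tr(P log P - P)`. -/
noncomputable def qH {d : ℕ} (P : Matrix (Fin d) (Fin d) ℝ) : ℝ :=
  -(P * mlog P - P).trace

/-- Quantum Kullback-Leibler divergence `KL(P|Q) = tr(P log P - P log Q - P + Q)`. -/
noncomputable def qKL {d : ℕ} (P Q : Matrix (Fin d) (Fin d) ℝ) : ℝ :=
  (P * mlog P - P * mlog Q - P + Q).trace

/-- The kernel `K(u,v)_{ij} = -(c_{ij} + ρ1 u_i + ρ2 v_j)/ε`. -/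
noncomputable def Kern {d : ℕ} {I J : Type*}
    (c : I → J → Matrix (Fin d) (Fin d) ℝ) (ρ1 ρ2 ε : ℝ)
    (u : I → Matrix (Fin d) (Fin d) ℝ) (v : J → Matrix (Fin d) (Fin d) ℝ)
    (i : I) (j : J) : Matrix (Fin d) (Fin d) ℝ :=
  (-ε⁻¹) • (c i j + ρ1 • u i + ρ2 • v j)

/-- Primal entropy-regularized quantum OT objective
`⟨γ,c⟩ + ρ1 KL(γ1_J|μ) + ρ2 KL(γᵀ1_I|ν) - ε H(γ)`. -/
noncomputable def primal {d : ℕ} {I J : Type*} [Fintype I] [Fintype J]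
    (c : I → J → Matrix (Fin d) (Fin d) ℝ)
    (μ : I → Matrix (Fin d) (Fin d) ℝ) (ν : J → Matrix (Fin d) (Fin d) ℝ)
    (ρ1 ρ2 ε : ℝ) (γ : I → J → Matrix (Fin d) (Fin d) ℝ) : ℝ :=
  (∑ i, ∑ j, ((γ i j) * (c i j)ᵀ).trace)
    + ρ1 * ∑ i, qKL (∑ j, γ i j) (μ i)
    + ρ2 * ∑ j, qKL (∑ i, γ i j) (ν j)
    - ε * ∑ i, ∑ j, qH (γ i j)

/-- Dual entropy-regularized quantum OT objective. -/
noncomputable def dualF {d : ℕ} {I J : Type*} [Fintype I] [Fintype J]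
    (c : I → J → Matrix (Fin d) (Fin d) ℝ)
    (μ : I → Matrix (Fin d) (Fin d) ℝ) (ν : J → Matrix (Fin d) (Fin d) ℝ)
    (ρ1 ρ2 ε : ℝ)
    (u : I → Matrix (Fin d) (Fin d) ℝ) (v : J → Matrix (Fin d) (Fin d) ℝ) : ℝ :=
  -(ρ1 * ∑ i, (mexp (u i + mlog (μ i)) - μ i).trace
    + ρ2 * ∑ j, (mexp (v j + mlog (ν j)) - ν j).trace
    + ε * ∑ i, ∑ j, (mexp (Kern c ρ1 ρ2 ε u v i j)).trace)

/-!
For Hermitian `u, v`, `primal γ` equals `dualF u v` plus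
`ε Σ KL(γ_ij | exp K_ij) + ρ1 Σ KL(γ1_J | exp(u + log μ)) + ρ2 Σ KL(γᵀ1_I | exp(v + log ν))`,
which is nonnegative for positive definite `γ` by Klein's inequality
`tr exp A + tr (exp A (B - A)) ≤ tr exp B`. At a maximizer `(u, v)` of the dual, the first-order
condition (again obtained from Klein's inequality, plus continuity of `exp`) says that the
marginals of `γ* = exp K(u, v)` are exactly `exp(u + log μ)` and `exp(v + log ν)`. Hence all
three divergences vanish at `γ*`, so `primal γ* = dualF u v ≤ primal γ`.
-/

open scoped Matrix.Norms.L2Operator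

section Spectral

variable {n : Type*} [Fintype n]

lemma Matrix.IsHermitian.trace_mul_self_nonpos_iff {h : Matrix n n ℝ} (hh : h.IsHermitian) :
    (h * h).trace ≤ 0 ↔ h = 0 := by
  refine ⟨fun hle => ?_, fun h0 => by simp [h0]⟩
  have hnonneg := (posSemidef_conjTranspose_mul_self h).trace_nonneg
  rw [hh.eq] at hnonneg
  rw [← trace_conjTranspose_mul_self_eq_zero_iff, hh.eq]
  exact le_antisymm hle hnonneg

variable [DecidableEq n]

lemma Matrix.IsHermitian.cfc_eq_conj {A : Matrix n n ℝ} (hA : A.IsHermitian) (f : ℝ → ℝ) :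
    cfc f A = (hA.eigenvectorUnitary : Matrix n n ℝ) * diagonal (f ∘ hA.eigenvalues) *
      star (hA.eigenvectorUnitary : Matrix n n ℝ) := by
  rw [hA.cfc_eq, IsHermitian.cfc, Unitary.conjStarAlgAut_apply]
  rfl

lemma trace_diagonal_mul_mul_diagonal_mul_star (a b : n → ℝ) (W : Matrix n n ℝ) :
    (diagonal a * W * diagonal b * star W).trace = ∑ k, ∑ l, a k * b l * W k l ^ 2 := by
  rw [trace]
  refine Finset.sum_congr rfl fun k _ => ?_
  rw [diag_apply, mul_apply]
  refine Finset.sum_congr rfl fun l _ => ?_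
  rw [mul_diagonal, diagonal_mul, star_apply, star_trivial]
  ring

lemma Matrix.IsHermitian.trace_cfc_mul_cfc {A B : Matrix n n ℝ} (hA : A.IsHermitian)
    (hB : B.IsHermitian) (f g : ℝ → ℝ) :
    (cfc f A * cfc g B).trace = ∑ k, ∑ l, f (hA.eigenvalues k) * g (hB.eigenvalues l) *
      (star (hA.eigenvectorUnitary : Matrix n n ℝ) * hB.eigenvectorUnitary) k l ^ 2 := by
  set U : Matrix n n ℝ := ↑hA.eigenvectorUnitary
  set V : Matrix n n ℝ := ↑hB.eigenvectorUnitary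
  rw [hA.cfc_eq_conj, hB.cfc_eq_conj, ← trace_diagonal_mul_mul_diagonal_mul_star]
  calc (U * diagonal (f ∘ hA.eigenvalues) * star U
        * (V * diagonal (g ∘ hB.eigenvalues) * star V)).trace
      = (U * (diagonal (f ∘ hA.eigenvalues) * (star U * V) * diagonal (g ∘ hB.eigenvalues))
          * star V).trace := by simp only [Matrix.mul_assoc]
    _ = _ := by rw [trace_mul_comm, ← Matrix.mul_assoc, trace_mul_comm, star_mul, star_star]; rfl

/-- Klein's inequality. -/
theorem Matrix.IsHermitian.trace_cfc_add_trace_mul_sub_le {A B : Matrix n n ℝ}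
    (hA : A.IsHermitian) (hB : B.IsHermitian) {f f' : ℝ → ℝ}
    (hf : ∀ a b, f a + f' a * (b - a) ≤ f b) :
    (cfc f A).trace + (cfc f' A * (B - A)).trace ≤ (cfc f B).trace := by
  -- All four traces are put in the form `tr (cfc _ A * cfc _ B)`, so that they share the
  -- weights `(U* V)_kl ^ 2` and the inequality reduces to the scalar one termwise.
  have hfA : (cfc f A).trace = (cfc f A * cfc (1 : ℝ → ℝ) B).trace := by
    rw [cfc_one ℝ B, Matrix.mul_one]
  have hf'B : (cfc f' A * B).trace = (cfc f' A * cfc (id : ℝ → ℝ) B).trace := by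
    rw [cfc_id ℝ B]
  have hf'A : (cfc f' A * A).trace = (cfc (fun x => f' x * x) A * cfc (1 : ℝ → ℝ) B).trace := by
    rw [cfc_one ℝ B, Matrix.mul_one,
      cfc_mul f' (fun x => x) A (A.finite_real_spectrum.continuousOn _), cfc_id' ℝ A]
  have hfB : (cfc f B).trace = (cfc (1 : ℝ → ℝ) A * cfc f B).trace := by
    rw [cfc_one ℝ A, Matrix.one_mul]
  rw [Matrix.mul_sub, trace_sub, hfA, hf'B, hf'A, hfB, hA.trace_cfc_mul_cfc hB,
    hA.trace_cfc_mul_cfc hB, hA.trace_cfc_mul_cfc hB, hA.trace_cfc_mul_cfc hB,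
    ← Finset.sum_sub_distrib, ← Finset.sum_add_distrib]
  refine Finset.sum_le_sum fun k _ => ?_
  rw [← Finset.sum_sub_distrib, ← Finset.sum_add_distrib]
  refine Finset.sum_le_sum fun l _ => ?_
  have := mul_le_mul_of_nonneg_right (hf (hA.eigenvalues k) (hB.eigenvalues l))
    (sq_nonneg ((star (hA.eigenvectorUnitary : Matrix n n ℝ) * hB.eigenvectorUnitary) k l))
  simp only [Pi.one_apply, id]
  linarith

end Spectral

section MatrixExpLog

variable {d : ℕ} {A P Q : Matrix (Fin d) (Fin d) ℝ}

lemma mexp_eq_cfc (hA : A.IsHermitian) : mexp A = cfc Real.exp A :=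
  (CFC.real_exp_eq_normedSpace_exp hA).symm

lemma mlog_eq_cfc (hA : A.IsHermitian) : mlog A = cfc Real.log A := by
  rw [mlog, dif_pos hA, hA.cfc_eq_conj]
  rfl

lemma isHermitian_mlog (A : Matrix (Fin d) (Fin d) ℝ) : (mlog A).IsHermitian := by
  by_cases hA : A.IsHermitian
  · rw [mlog_eq_cfc hA]
    exact cfc_predicate _ A
  · rw [mlog, dif_neg hA]
    exact isHermitian_zero

lemma mlog_mexp (hA : A.IsHermitian) : mlog (mexp A) = A := by
  rw [mexp, mlog_eq_cfc hA.exp]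
  exact CFC.log_exp A hA

open scoped MatrixOrder in
lemma mexp_mlog (hP : P.PosDef) : mexp (mlog P) = P := by
  rw [mlog_eq_cfc hP.isHermitian, mexp]
  exact CFC.exp_log P hP.isStrictlyPositive

lemma posDef_mexp (hA : A.IsHermitian) : (mexp A).PosDef := by
  rw [mexp_eq_cfc hA, hA.cfc_eq_conj, Matrix.IsUnit.posDef_star_right_conjugate_iff
    Unitary.isUnit_coe]
  exact PosDef.diagonal fun _ => Real.exp_pos _

@[fun_prop]
lemma continuous_mexp : Continuous (mexp : Matrix (Fin d) (Fin d) ℝ → _) :=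
  continuous_iff_continuousAt.2 fun x => (NormedSpace.exp_analytic (𝕂 := ℝ) x).continuousAt

lemma trace_mexp_add_trace_mul_sub_le {B : Matrix (Fin d) (Fin d) ℝ} (hA : A.IsHermitian)
    (hB : B.IsHermitian) : (mexp A).trace + (mexp A * (B - A)).trace ≤ (mexp B).trace := by
  rw [mexp_eq_cfc hA, mexp_eq_cfc hB]
  exact hA.trace_cfc_add_trace_mul_sub_le hB fun a b => by
    have := mul_le_mul_of_nonneg_left (Real.add_one_le_exp (b - a)) (Real.exp_pos a).le
    rw [← Real.exp_add, add_sub_cancel] at this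
    linarith

lemma trace_mexp_add_sub_trace_mexp_le {X : Matrix (Fin d) (Fin d) ℝ} (hA : A.IsHermitian)
    (hX : X.IsHermitian) : (mexp (A + X)).trace - (mexp A).trace ≤ (mexp (A + X) * X).trace := by
  have := trace_mexp_add_trace_mul_sub_le (hA.add hX) hA
  rw [sub_add_cancel_left, Matrix.mul_neg, trace_neg] at this
  linarith

lemma qKL_nonneg (hP : P.PosDef) (hQ : Q.PosDef) : 0 ≤ qKL P Q := by
  have := trace_mexp_add_trace_mul_sub_le (isHermitian_mlog P) (isHermitian_mlog Q)
  rw [mexp_mlog hP, mexp_mlog hQ, Matrix.mul_sub, trace_sub] at this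
  simp only [qKL, trace_add, trace_sub]
  linarith

lemma qKL_sum_nonneg {κ : Type*} [Fintype κ] {P : κ → Matrix (Fin d) (Fin d) ℝ}
    (hP : ∀ k, (P k).PosDef) (hQ : Q.PosDef) : 0 ≤ qKL (∑ k, P k) Q := by
  classical
  rcases isEmpty_or_nonempty κ with hκ | ⟨⟨k⟩⟩
  · simpa [qKL] using hQ.posSemidef.trace_nonneg
  · refine qKL_nonneg ?_ hQ
    rw [← Finset.add_sum_erase _ _ (Finset.mem_univ k)]
    exact (hP k).add_posSemidef (posSemidef_sum _ fun k _ => (hP k).posSemidef)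

@[simp]
lemma qKL_self (P : Matrix (Fin d) (Fin d) ℝ) : qKL P P = 0 := by
  simp [qKL]

lemma qKL_mexp_right {X : Matrix (Fin d) (Fin d) ℝ} (hX : X.IsHermitian) :
    qKL P (mexp X) = (P * mlog P).trace - (P * X).trace - P.trace + (mexp X).trace := by
  simp only [qKL, mlog_mexp hX, trace_add, trace_sub]

lemma qKL_mexp_add_mlog {X : Matrix (Fin d) (Fin d) ℝ} (hX : X.IsHermitian) :
    qKL P (mexp (X + mlog Q)) = qKL P Q - (P * X).trace + (mexp (X + mlog Q) - Q).trace := by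
  rw [qKL_mexp_right (hX.add (isHermitian_mlog Q))]
  simp only [qKL, Matrix.mul_add, trace_add, trace_sub]
  ring

lemma sum_smul_mexp_eq_zero_of_forall_le {κ : Type*} [Fintype κ] {a s : κ → ℝ}
    (ha : ∀ k, 0 ≤ a k) {A : κ → Matrix (Fin d) (Fin d) ℝ} (hA : ∀ k, (A k).IsHermitian)
    (hmin : ∀ W : Matrix (Fin d) (Fin d) ℝ, W.IsHermitian →
      ∑ k, a k * (mexp (A k)).trace ≤ ∑ k, a k * (mexp (A k + s k • W)).trace) :
    ∑ k, (a k * s k) • mexp (A k) = 0 := by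
  set h := ∑ k, (a k * s k) • mexp (A k)
  have hh : h.IsHermitian :=
    isSelfAdjoint_sum _ fun k _ => (hA k).exp.smul (.all _)
  -- Klein's inequality at the point perturbed by `W = -t • h` gives `0 ≤ -t * g t`,
  -- and `g 0 = tr (h * h)`.
  set g : ℝ → ℝ := fun t => ((∑ k, (a k * s k) • mexp (A k + s k • (-t • h))) * h).trace
  have hg : Continuous g := by fun_prop
  have hg_nonpos : ∀ t, 0 < t → g t ≤ 0 := by
    intro t ht
    have hklein k := mul_le_mul_of_nonneg_left
      (trace_mexp_add_sub_trace_mexp_le (hA k) ((hh.smul (.all (-t))).smul (.all (s k)))) (ha k)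
    have hsum := Finset.sum_le_sum fun k (_ : k ∈ Finset.univ) => hklein k
    have hg_eq : ∑ k, a k * (mexp (A k + s k • -t • h) * s k • -t • h).trace = -t * g t := by
      simp only [g, Matrix.sum_mul, trace_sum, Finset.mul_sum, smul_mul, Matrix.mul_smul,
        trace_smul, smul_eq_mul]
      exact Finset.sum_congr rfl fun k _ => by ring
    simp only [mul_sub, Finset.sum_sub_distrib] at hsum
    nlinarith [hmin _ (hh.smul (.all (-t)))]
  have hg0 : g 0 ≤ 0 :=
    le_of_tendsto (hg.tendsto 0 |>.mono_left nhdsWithin_le_nhds)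
      (eventually_nhdsWithin_of_forall (s := Set.Ioi 0) fun t ht => hg_nonpos t ht)
  simp only [g, neg_zero, zero_smul, smul_zero, add_zero] at hg0
  exact hh.trace_mul_self_nonpos_iff.1 hg0

end MatrixExpLog

lemma Finset.sum_apply_update_sub {ι M : Type*} [Fintype ι] [DecidableEq ι] (f : ι → M → ℝ)
    (x : ι → M) (i : ι) (y : M) :
    ∑ k, f k (Function.update x i y k) - ∑ k, f k (x k) = f i y - f i (x i) := by
  rw [← Finset.sum_sub_distrib, Finset.sum_eq_single i (fun k _ hk => by
    rw [Function.update_of_ne hk, sub_self]) (fun h => absurd (Finset.mem_univ i) h),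
    Function.update_self]

section Kernel

variable {d : ℕ} {I J : Type*} {c : I → J → Matrix (Fin d) (Fin d) ℝ} {ρ1 ρ2 ε : ℝ}
  {u : I → Matrix (Fin d) (Fin d) ℝ} {v : J → Matrix (Fin d) (Fin d) ℝ}

lemma isHermitian_Kern (hc : ∀ i j, (c i j).IsHermitian) (hu : ∀ i, (u i).IsHermitian)
    (hv : ∀ j, (v j).IsHermitian) (i : I) (j : J) : (Kern c ρ1 ρ2 ε u v i j).IsHermitian :=
  (((hc i j).add ((hu i).smul (.all _))).add ((hv j).smul (.all _))).smul (.all _)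

lemma Kern_swap (i : I) (j : J) :
    Kern (fun j i => c i j) ρ2 ρ1 ε v u j i = Kern c ρ1 ρ2 ε u v i j := by
  simp only [Kern, add_right_comm]

lemma mul_qKL_mexp_Kern (hc : ∀ i j, (c i j).IsHermitian) (hε : ε ≠ 0)
    (hu : ∀ i, (u i).IsHermitian) (hv : ∀ j, (v j).IsHermitian)
    (P : Matrix (Fin d) (Fin d) ℝ) (i : I) (j : J) :
    ε * qKL P (mexp (Kern c ρ1 ρ2 ε u v i j)) = (P * c i j).trace + ρ1 * (P * u i).trace
      + ρ2 * (P * v j).trace + ε * ((P * mlog P).trace - P.trace)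
      + ε * (mexp (Kern c ρ1 ρ2 ε u v i j)).trace := by
  rw [qKL_mexp_right (isHermitian_Kern hc hu hv i j)]
  simp only [Kern, Matrix.mul_smul, Matrix.mul_add, trace_smul, trace_add, smul_eq_mul]
  field_simp
  ring

end Kernel

section Duality

variable {d : ℕ} {I J : Type*} [Fintype I] [Fintype J] {c : I → J → Matrix (Fin d) (Fin d) ℝ}
  {μ : I → Matrix (Fin d) (Fin d) ℝ} {ν : J → Matrix (Fin d) (Fin d) ℝ} {ρ1 ρ2 ε : ℝ}
  {u : I → Matrix (Fin d) (Fin d) ℝ} {v : J → Matrix (Fin d) (Fin d) ℝ}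

def IsDualMaximizer (c : I → J → Matrix (Fin d) (Fin d) ℝ) (μ : I → Matrix (Fin d) (Fin d) ℝ)
    (ν : J → Matrix (Fin d) (Fin d) ℝ) (ρ1 ρ2 ε : ℝ) (u : I → Matrix (Fin d) (Fin d) ℝ)
    (v : J → Matrix (Fin d) (Fin d) ℝ) : Prop :=
  ∀ (u' : I → Matrix (Fin d) (Fin d) ℝ) (v' : J → Matrix (Fin d) (Fin d) ℝ),
    (∀ i, (u' i).IsHermitian) → (∀ j, (v' j).IsHermitian) →
      dualF c μ ν ρ1 ρ2 ε u' v' ≤ dualF c μ ν ρ1 ρ2 ε u v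

lemma dualF_swap :
    dualF (fun j i => c i j) ν μ ρ2 ρ1 ε v u = dualF c μ ν ρ1 ρ2 ε u v := by
  simp only [dualF, Kern_swap]
  rw [Finset.sum_comm (f := fun j i => (mexp (Kern c ρ1 ρ2 ε u v i j)).trace)]
  ring

lemma IsDualMaximizer.swap (hmax : IsDualMaximizer c μ ν ρ1 ρ2 ε u v) :
    IsDualMaximizer (fun j i => c i j) ν μ ρ2 ρ1 ε v u := fun v' u' hv' hu' => by
  simpa only [dualF_swap] using hmax u' v' hu' hv'

lemma IsDualMaximizer.row_objective_le (hu : ∀ i, (u i).IsHermitian)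
    (hv : ∀ j, (v j).IsHermitian) (hmax : IsDualMaximizer c μ ν ρ1 ρ2 ε u v) (i : I) {W : Matrix (Fin d) (Fin d) ℝ}
    (hW : W.IsHermitian) :
    ρ1 * (mexp (u i + mlog (μ i))).trace + ε * ∑ j, (mexp (Kern c ρ1 ρ2 ε u v i j)).trace ≤
      ρ1 * (mexp (u i + mlog (μ i) + W)).trace
        + ε * ∑ j, (mexp (Kern c ρ1 ρ2 ε u v i j + (-(ε⁻¹ * ρ1)) • W)).trace := by
  classical
  set φ : I → Matrix (Fin d) (Fin d) ℝ → ℝ := fun i w => ρ1 * (mexp (w + mlog (μ i))).trace +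
    ε * ∑ j, (mexp ((-ε⁻¹) • (c i j + ρ1 • w + ρ2 • v j))).trace
  have hdual (u' : I → Matrix (Fin d) (Fin d) ℝ) : dualF c μ ν ρ1 ρ2 ε u' v =
      -(∑ i, φ i (u' i) - ρ1 * ∑ i, (μ i).trace
        + ρ2 * ∑ j, (mexp (v j + mlog (ν j)) - ν j).trace) := by
    simp only [dualF, φ, Kern, trace_sub, Finset.sum_sub_distrib, Finset.sum_add_distrib,
      ← Finset.mul_sum]
    ring
  have hle := hmax (Function.update u i (u i + W)) v (fun k => by
    rcases eq_or_ne k i with rfl | hk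
    · simpa using (hu k).add hW
    · simpa [Function.update_of_ne hk] using hu k) hv
  have hupdate := Finset.sum_apply_update_sub φ u i (u i + W)
  rw [hdual, hdual] at hle
  have hKern (j : J) : (-ε⁻¹) • (c i j + ρ1 • (u i + W) + ρ2 • v j) =
      Kern c ρ1 ρ2 ε u v i j + (-(ε⁻¹ * ρ1)) • W := by
    simp only [Kern]
    module
  have hφ : φ i (u i + W) = ρ1 * (mexp (u i + mlog (μ i) + W)).trace
      + ε * ∑ j, (mexp (Kern c ρ1 ρ2 ε u v i j + (-(ε⁻¹ * ρ1)) • W)).trace := by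
    simp only [φ, hKern, add_right_comm (u i) W]
  have hrow : φ i (u i) ≤ φ i (u i + W) := by linarith
  rwa [hφ] at hrow

lemma IsDualMaximizer.first_marginal_eq (hc : ∀ i j, (c i j).IsHermitian) (hρ1 : 0 < ρ1)
    (hε : 0 < ε) (hu : ∀ i, (u i).IsHermitian) (hv : ∀ j, (v j).IsHermitian)
    (hmax : IsDualMaximizer c μ ν ρ1 ρ2 ε u v) (i : I) :
    ∑ j, mexp (Kern c ρ1 ρ2 ε u v i j) = mexp (u i + mlog (μ i)) := by
  have hzero := sum_smul_mexp_eq_zero_of_forall_le (κ := Option J)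
    (a := fun k => k.elim ρ1 fun _ => ε) (s := fun k => k.elim 1 fun _ => -(ε⁻¹ * ρ1))
    (A := fun k => k.elim (u i + mlog (μ i)) fun j => Kern c ρ1 ρ2 ε u v i j)
    (fun k => by cases k <;> simp [hρ1.le, hε.le])
    (fun k => by
      cases k with
      | none => exact (hu i).add (isHermitian_mlog _)
      | some j => exact isHermitian_Kern hc hu hv i j)
    (fun W hW => by
      simpa only [Fintype.sum_option, Option.elim, one_smul, ← Finset.mul_sum]
        using hmax.row_objective_le hu hv i hW)
  have hcoef : ε * -(ε⁻¹ * ρ1) = -ρ1 := by field_simp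
  simp only [Fintype.sum_option, Option.elim, mul_one, hcoef, neg_smul, Finset.sum_neg_distrib,
    ← Finset.smul_sum, ← sub_eq_add_neg, ← smul_sub, smul_eq_zero, hρ1.ne', false_or,
    sub_eq_zero] at hzero
  exact hzero.symm

lemma IsDualMaximizer.second_marginal_eq (hc : ∀ i j, (c i j).IsHermitian) (hρ2 : 0 < ρ2)
    (hε : 0 < ε) (hu : ∀ i, (u i).IsHermitian) (hv : ∀ j, (v j).IsHermitian)
    (hmax : IsDualMaximizer c μ ν ρ1 ρ2 ε u v) (j : J) :
    ∑ i, mexp (Kern c ρ1 ρ2 ε u v i j) = mexp (v j + mlog (ν j)) := by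
  simpa only [Kern_swap] using hmax.swap.first_marginal_eq (fun j i => hc i j) hρ2 hε hv hu j

theorem primal_eq_dualF_add_qKL (hc : ∀ i j, (c i j).IsHermitian) (hε : ε ≠ 0)
    (hu : ∀ i, (u i).IsHermitian) (hv : ∀ j, (v j).IsHermitian)
    (γ : I → J → Matrix (Fin d) (Fin d) ℝ) :
    primal c μ ν ρ1 ρ2 ε γ = dualF c μ ν ρ1 ρ2 ε u v
      + ε * ∑ i, ∑ j, qKL (γ i j) (mexp (Kern c ρ1 ρ2 ε u v i j))
      + ρ1 * ∑ i, qKL (∑ j, γ i j) (mexp (u i + mlog (μ i)))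
      + ρ2 * ∑ j, qKL (∑ i, γ i j) (mexp (v j + mlog (ν j))) := by
  have hcT i j : (γ i j * (c i j)ᵀ).trace = (γ i j * c i j).trace := by
    rw [← conjTranspose_eq_transpose_of_trivial, (hc i j).eq]
  simp only [primal, dualF, qH, hcT, Finset.mul_sum, mul_qKL_mexp_Kern hc hε hu hv,
    qKL_mexp_add_mlog (hu _), qKL_mexp_add_mlog (hv _), Matrix.sum_mul, trace_sum]
  simp only [mul_add, mul_sub, mul_neg, trace_sub, Finset.sum_add_distrib, Finset.sum_sub_distrib,
    Finset.sum_neg_distrib, Finset.mul_sum]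
  rw [Finset.sum_comm (f := fun j i => ρ2 * (γ i j * v j).trace)]
  ring

theorem dualF_le_primal (hc : ∀ i j, (c i j).IsHermitian) (hρ1 : 0 ≤ ρ1) (hρ2 : 0 ≤ ρ2)
    (hε : 0 < ε) (hu : ∀ i, (u i).IsHermitian) (hv : ∀ j, (v j).IsHermitian)
    {γ : I → J → Matrix (Fin d) (Fin d) ℝ} (hγ : ∀ i j, (γ i j).PosDef) :
    dualF c μ ν ρ1 ρ2 ε u v ≤ primal c μ ν ρ1 ρ2 ε γ := by
  have hG : 0 ≤ ε * ∑ i, ∑ j, qKL (γ i j) (mexp (Kern c ρ1 ρ2 ε u v i j)) :=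
    mul_nonneg hε.le <| Finset.sum_nonneg fun i _ => Finset.sum_nonneg fun j _ =>
      qKL_nonneg (hγ i j) (posDef_mexp (isHermitian_Kern hc hu hv i j))
  have hM : 0 ≤ ρ1 * ∑ i, qKL (∑ j, γ i j) (mexp (u i + mlog (μ i))) :=
    mul_nonneg hρ1 <| Finset.sum_nonneg fun i _ =>
      qKL_sum_nonneg (hγ i) (posDef_mexp ((hu i).add (isHermitian_mlog _)))
  have hN : 0 ≤ ρ2 * ∑ j, qKL (∑ i, γ i j) (mexp (v j + mlog (ν j))) :=
    mul_nonneg hρ2 <| Finset.sum_nonneg fun j _ =>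
      qKL_sum_nonneg (fun i => hγ i j) (posDef_mexp ((hv j).add (isHermitian_mlog _)))
  rw [primal_eq_dualF_add_qKL hc hε.ne' hu hv γ]
  linarith

theorem IsDualMaximizer.primal_eq_dualF (hc : ∀ i j, (c i j).IsHermitian) (hρ1 : 0 < ρ1)
    (hρ2 : 0 < ρ2) (hε : 0 < ε) (hu : ∀ i, (u i).IsHermitian) (hv : ∀ j, (v j).IsHermitian)
    (hmax : IsDualMaximizer c μ ν ρ1 ρ2 ε u v) :
    primal c μ ν ρ1 ρ2 ε (fun i j => mexp (Kern c ρ1 ρ2 ε u v i j)) = dualF c μ ν ρ1 ρ2 ε u v := by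
  simp [primal_eq_dualF_add_qKL hc hε.ne' hu hv, hmax.first_marginal_eq hc hρ1 hε hu hv,
    hmax.second_marginal_eq hc hρ2 hε hu hv]

end Duality

theorem quantum_ot_primal_dual_optimality_general {d : ℕ} {I J : Type*} [Fintype I] [Fintype J]
    (c : I → J → Matrix (Fin d) (Fin d) ℝ) (hc : ∀ i j, (c i j).IsHermitian)
    (ρ1 ρ2 ε : ℝ) (hρ1 : 0 < ρ1) (hρ2 : 0 < ρ2) (hε : 0 < ε)
    (μ : I → Matrix (Fin d) (Fin d) ℝ) (ν : J → Matrix (Fin d) (Fin d) ℝ)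
    (u : I → Matrix (Fin d) (Fin d) ℝ) (v : J → Matrix (Fin d) (Fin d) ℝ)
    (hu : ∀ i, (u i).IsHermitian) (hv : ∀ j, (v j).IsHermitian)
    (hmax : ∀ (u' : I → Matrix (Fin d) (Fin d) ℝ) (v' : J → Matrix (Fin d) (Fin d) ℝ),
      (∀ i, (u' i).IsHermitian) → (∀ j, (v' j).IsHermitian) →
        dualF c μ ν ρ1 ρ2 ε u' v' ≤ dualF c μ ν ρ1 ρ2 ε u v) :
    (∀ i j, (mexp (Kern c ρ1 ρ2 ε u v i j)).PosDef) ∧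
    ∀ γ : I → J → Matrix (Fin d) (Fin d) ℝ, (∀ i j, (γ i j).PosDef) →
      primal c μ ν ρ1 ρ2 ε (fun i j => mexp (Kern c ρ1 ρ2 ε u v i j))
        ≤ primal c μ ν ρ1 ρ2 ε γ := by
  refine ⟨fun i j => posDef_mexp (isHermitian_Kern hc hu hv i j), fun γ hγ => ?_⟩
  rw [IsDualMaximizer.primal_eq_dualF hc hρ1 hρ2 hε hu hv hmax]
  exact dualF_le_primal hc hρ1.le hρ2.le hε hu hv hγ

/-- **Primal-dual optimality relation.** If `(u*, v*)` maximizes the dual functional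
over collections of symmetric matrices, then `γ*_{ij} := exp(K(u*,v*)_{ij})` consists
of positive definite matrices and minimizes the primal objective over collections of
positive definite matrices. -/
theorem quantum_ot_primal_dual_optimality {d : ℕ} {I J : Type*} [Fintype I] [Fintype J]
    (c : I → J → Matrix (Fin d) (Fin d) ℝ) (hc : ∀ i j, (c i j).IsHermitian)
    (ρ1 ρ2 ε : ℝ) (hρ1 : 0 < ρ1) (hρ2 : 0 < ρ2) (hε : 0 < ε)
    (μ : I → Matrix (Fin d) (Fin d) ℝ) (ν : J → Matrix (Fin d) (Fin d) ℝ)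
    (hμ : ∀ i, (μ i).PosDef) (hν : ∀ j, (ν j).PosDef)
    (u : I → Matrix (Fin d) (Fin d) ℝ) (v : J → Matrix (Fin d) (Fin d) ℝ)
    (hu : ∀ i, (u i).IsHermitian) (hv : ∀ j, (v j).IsHermitian)
    (hmax : ∀ (u' : I → Matrix (Fin d) (Fin d) ℝ) (v' : J → Matrix (Fin d) (Fin d) ℝ),
      (∀ i, (u' i).IsHermitian) → (∀ j, (v' j).IsHermitian) →
        dualF c μ ν ρ1 ρ2 ε u' v' ≤ dualF c μ ν ρ1 ρ2 ε u v) :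
    (∀ i j, (mexp (Kern c ρ1 ρ2 ε u v i j)).PosDef) ∧
    ∀ γ : I → J → Matrix (Fin d) (Fin d) ℝ, (∀ i j, (γ i j).PosDef) →
      primal c μ ν ρ1 ρ2 ε (fun i j => mexp (Kern c ρ1 ρ2 ε u v i j))
        ≤ primal c μ ν ρ1 ρ2 ε γ :=
  quantum_ot_primal_dual_optimality_general c hc ρ1 ρ2 ε hρ1 hρ2 hε μ ν u v hu hv hmax
end

section
/- Gradient of the trace-exponential: the map X ↦ tr(exp X) defined on real symmetric d×d matrices is differentiable, and its derivative at X in any symmetric direction V equals tr( exp(X) · V ) (even though X and V need not commute). -/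
open Matrix

/-! For a continuous linear map `τ` with `τ (a * b) = τ (b * a)` (here the matrix trace), expand
`τ (exp a) = ∑ τ (aⁿ) / n!` and differentiate termwise. The derivative of `a ↦ aⁿ` at `x` is
`v ↦ ∑_{i<n} x^(n-1-i) v x^i`; by cyclicity every summand has the same image `τ (x^(n-1) v)`, so
the `n`-th term contributes `τ (x^(n-1) v) / (n-1)!`, and these add up to `τ (exp x * v)`. On the
ball of radius `R = ‖x‖ + 1` the derivatives are dominated by `‖τ‖ Rⁿ⁻¹ / (n-1)!`, which justifies
the termwise differentiation. -/

open NormedSpace ContinuousLinearMap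
open scoped Nat

section TraceExp

variable {𝕂 𝔸 F : Type*} [RCLike 𝕂] [NormedRing 𝔸] [NormedAlgebra 𝕂 𝔸]
  [NormedAddCommGroup F] [NormedSpace 𝕂 F]

theorem inv_factorial_succ_mul_succ {K : Type*} [DivisionRing K] [CharZero K] (n : ℕ) :
    ((n + 1)! : K)⁻¹ * (n + 1 : ℕ) = (n ! : K)⁻¹ := by
  rw [Nat.factorial_succ, Nat.cast_mul, _root_.mul_inv_rev, mul_assoc,
    inv_mul_cancel₀ (Nat.cast_ne_zero.mpr n.succ_ne_zero), mul_one]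

theorem summable_inv_factorial_mul_pow_pred (r : ℝ) :
    Summable fun n : ℕ => ((n ! : ℝ)⁻¹ * n) * r ^ (n - 1) := by
  refine (summable_nat_add_iff 1).mp ?_
  simpa only [inv_factorial_succ_mul_succ, Nat.add_sub_cancel, div_eq_inv_mul]
    using Real.summable_pow_div_factorial r

theorem exp_series_pred_hasSum_exp [CompleteSpace 𝔸] (x : 𝔸) :
    HasSum (fun n : ℕ => ((n ! : 𝕂)⁻¹ * n) • x ^ (n - 1)) (exp x) := by
  rw [← hasSum_nat_add_iff' 1]
  simpa only [Finset.sum_range_one, Nat.cast_zero, mul_zero, zero_smul, sub_zero,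
    Nat.add_sub_cancel, inv_factorial_succ_mul_succ] using exp_series_hasSum_exp' (𝕂 := 𝕂) x

-- Holds with `n = 0` too, unlike `‖a ^ n‖ ≤ ‖a‖ ^ n`: the Frobenius norm has `‖1‖ = √d`.
theorem norm_pow_mul_le (a b : 𝔸) (n : ℕ) : ‖a ^ n * b‖ ≤ ‖a‖ ^ n * ‖b‖ := by
  induction n with
  | zero => simp
  | succ n ih =>
    calc ‖a ^ (n + 1) * b‖ = ‖a * (a ^ n * b)‖ := by rw [pow_succ', mul_assoc]
      _ ≤ ‖a‖ * (‖a‖ ^ n * ‖b‖) := norm_mul_le_of_le le_rfl ih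
      _ = ‖a‖ ^ (n + 1) * ‖b‖ := by ring

theorem norm_comp_mul_pow_le (τ : 𝔸 →L[𝕂] F) (a : 𝔸) (n : ℕ) :
    ‖τ.comp (mul 𝕂 𝔸 (a ^ n))‖ ≤ ‖τ‖ * ‖a‖ ^ n :=
  opNorm_le_bound _ (by positivity) fun b =>
    calc ‖τ (a ^ n * b)‖ ≤ ‖τ‖ * ‖a ^ n * b‖ := τ.le_opNorm _
      _ ≤ ‖τ‖ * (‖a‖ ^ n * ‖b‖) := by gcongr; exact norm_pow_mul_le a b n
      _ = ‖τ‖ * ‖a‖ ^ n * ‖b‖ := by ring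

theorem hasFDerivAt_trace_pow (τ : 𝔸 →L[𝕂] F) (hτ : ∀ a b, τ (a * b) = τ (b * a))
    (n : ℕ) (x : 𝔸) :
    HasFDerivAt (fun a => τ (a ^ n)) ((n : 𝕂) • τ.comp (mul 𝕂 𝔸 (x ^ (n - 1)))) x := by
  refine (τ.hasFDerivAt.comp x (hasFDerivAt_pow' n)).congr_fderiv (ext fun v => ?_)
  have cyclic (i : ℕ) (hi : i ∈ Finset.range n) :
      τ (x ^ (n - 1 - i) * v * x ^ i) = τ (x ^ (n - 1) * v) := by
    rw [hτ, ← mul_assoc, ← pow_add,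
      Nat.add_sub_of_le (Nat.le_sub_one_of_lt (Finset.mem_range.mp hi))]
  simp only [MulOpposite.op_pow, Nat.pred_eq_sub_one, ContinuousLinearMap.comp_apply,
    _root_.sum_apply, _root_.smul_apply, ContinuousLinearMap.id_apply, smul_eq_mul,
    MulOpposite.smul_eq_mul_unop, MulOpposite.unop_pow, MulOpposite.unop_op, map_sum,
    ContinuousLinearMap.mul_apply']
  rw [Finset.sum_congr rfl cyclic, Finset.sum_const, Finset.card_range, Nat.cast_smul_eq_nsmul]

theorem hasFDerivAt_trace_exp [CompleteSpace 𝔸] [CompleteSpace F] (τ : 𝔸 →L[𝕂] F)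
    (hτ : ∀ a b, τ (a * b) = τ (b * a)) (x : 𝔸) :
    HasFDerivAt (fun a => τ (exp a)) (τ.comp (mul 𝕂 𝔸 (exp x))) x := by
  have hsum (a : 𝔸) : HasSum (fun n : ℕ => (n ! : 𝕂)⁻¹ • τ (a ^ n)) (τ (exp a)) := by
    simpa only [map_smul] using τ.hasSum (exp_series_hasSum_exp' (𝕂 := 𝕂) a)
  have hsum_deriv : HasSum (fun n : ℕ => ((n ! : 𝕂)⁻¹ * n) • τ.comp (mul 𝕂 𝔸 (x ^ (n - 1))))
      (τ.comp (mul 𝕂 𝔸 (exp x))) := by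
    simpa only [map_smul, coe_comp, Function.comp_apply, compL_apply]
      using ((compL 𝕂 𝔸 𝔸 F τ).comp (mul 𝕂 𝔸)).hasSum (exp_series_pred_hasSum_exp (𝕂 := 𝕂) x)
  have hterm (n : ℕ) (a : 𝔸) : HasFDerivAt (fun b => (n ! : 𝕂)⁻¹ • τ (b ^ n))
      (((n ! : 𝕂)⁻¹ * n) • τ.comp (mul 𝕂 𝔸 (a ^ (n - 1)))) a := by
    simpa only [smul_smul] using (hasFDerivAt_trace_pow τ hτ n a).fun_const_smul (n ! : 𝕂)⁻¹
  set R := ‖x‖ + 1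
  have hbound (n : ℕ) (a : 𝔸) (ha : a ∈ Metric.ball 0 R) :
      ‖((n ! : 𝕂)⁻¹ * n) • τ.comp (mul 𝕂 𝔸 (a ^ (n - 1)))‖
        ≤ ‖τ‖ * (((n ! : ℝ)⁻¹ * n) * R ^ (n - 1)) := by
    rw [mem_ball_zero_iff] at ha
    rw [norm_smul, norm_mul, norm_inv, RCLike.norm_natCast, RCLike.norm_natCast]
    calc _ ≤ ((n ! : ℝ)⁻¹ * n) * (‖τ‖ * ‖a‖ ^ (n - 1)) := by
          gcongr; exact norm_comp_mul_pow_le τ a (n - 1)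
      _ ≤ _ := by rw [mul_left_comm]; gcongr
  have hx : x ∈ Metric.ball 0 R := by simp [R]
  let : NormedSpace ℝ 𝔸 := NormedSpace.restrictScalars ℝ 𝕂 𝔸
  have := hasFDerivAt_tsum_of_isPreconnected
    ((summable_inv_factorial_mul_pow_pred R).mul_left ‖τ‖) Metric.isOpen_ball
    (convex_ball 0 R).isPreconnected (fun n a _ => hterm n a) hbound hx (hsum x).summable hx
  simpa only [(hsum _).tsum_eq, hsum_deriv.tsum_eq] using this

end TraceExp

attribute [local instance] Matrix.frobeniusNormedAddCommGroup Matrix.frobeniusNormedSpace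

theorem trace_exp_hasFDeriv_general {d : ℕ} (X : Matrix (Fin d) (Fin d) ℝ) :
    ∃ f' : Matrix (Fin d) (Fin d) ℝ →L[ℝ] ℝ,
      HasFDerivWithinAt (fun A : Matrix (Fin d) (Fin d) ℝ => (mexp A).trace) f'
        {A : Matrix (Fin d) (Fin d) ℝ | A.IsHermitian} X ∧
      ∀ V : Matrix (Fin d) (Fin d) ℝ, V.IsHermitian → f' V = (mexp X * V).trace := by
  let : NormedRing (Matrix (Fin d) (Fin d) ℝ) := Matrix.frobeniusNormedRing
  let : NormedAlgebra ℝ (Matrix (Fin d) (Fin d) ℝ) := Matrix.frobeniusNormedAlgebra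
  let tr : Matrix (Fin d) (Fin d) ℝ →L[ℝ] ℝ :=
    LinearMap.toContinuousLinearMap (Matrix.traceLinearMap (Fin d) ℝ ℝ)
  exact ⟨tr.comp (ContinuousLinearMap.mul ℝ _ (mexp X)),
    (hasFDerivAt_trace_exp tr (fun A B => trace_mul_comm A B) X).hasFDerivWithinAt,
    fun V _ => rfl⟩

/-- **Gradient of the trace-exponential.** The map `X ↦ tr(exp X)`, defined on real
symmetric `d×d` matrices, is differentiable, and its derivative at `X` in any symmetric
direction `V` equals `tr(exp(X)·V)`. -/
theorem trace_exp_hasFDeriv {d : ℕ} (X : Matrix (Fin d) (Fin d) ℝ) (hX : X.IsHermitian) :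
    ∃ f' : Matrix (Fin d) (Fin d) ℝ →L[ℝ] ℝ,
      HasFDerivWithinAt (fun A : Matrix (Fin d) (Fin d) ℝ => (mexp A).trace) f'
        {A : Matrix (Fin d) (Fin d) ℝ | A.IsHermitian} X ∧
      ∀ V : Matrix (Fin d) (Fin d) ℝ, V.IsHermitian → f' V = (mexp X * V).trace :=
  trace_exp_hasFDeriv_general X
end
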